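/- arXiv:1506.06421 — 6 statements merged into one kernel-verified Lean document; each statement's English description precedes it below -/
import Mathlib

section
/- The function Φ(z) = a/z + b + c·z is injective on the punctured open unit disc {z : 0 < |z| < 1} if and only if |a| ≥ |c|. -/
/-!
For `z, w ≠ 0` one has `Φ z - Φ w = (z - w) (c z w - a) / (z w)`, so `Φ` identifies two distinct
points `z, w` exactly when `c z w = a`. If `‖c‖ ≤ ‖a‖` this is impossible in the punctured disc,
since there `‖c z w‖ < ‖a‖`. If `‖c‖ > ‖a‖`, write `a / c = u²` with `0 < ‖u‖ < 1`; for a real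
`1 < t < ‖u‖⁻¹` the distinct points `t u` and `u / t` of the punctured disc have product `a / c`.
-/

open Set

def puncturedUnitDisc : Set ℂ := {z | 0 < ‖z‖ ∧ ‖z‖ < 1}

lemma zero_notMem_puncturedUnitDisc : (0 : ℂ) ∉ puncturedUnitDisc := by
  simp [puncturedUnitDisc]

lemma div_add_add_mul_eq_iff {K : Type*} [Field K] {a b c z w : K} (hz : z ≠ 0) (hw : w ≠ 0) :
    a / z + b + c * z = a / w + b + c * w ↔ z = w ∨ a = c * (z * w) := by
  have hsub : a / z + b + c * z - (a / w + b + c * w) = (z - w) * (c * (z * w) - a) / (z * w) := by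
    field_simp
    ring
  rw [← sub_eq_zero, hsub, div_eq_zero_iff, mul_eq_zero, sub_eq_zero, sub_eq_zero, eq_comm (a := c * _)]
  simp [hz, hw]

lemma injOn_div_add_add_mul_iff {K : Type*} [Field K] {s : Set K} (hs : (0 : K) ∉ s) (a b c : K) :
    InjOn (fun z => a / z + b + c * z) s ↔ ∀ z ∈ s, ∀ w ∈ s, z ≠ w → a ≠ c * (z * w) := by
  have hne : ∀ z ∈ s, z ≠ 0 := fun z hz h => hs (h ▸ hz)
  refine ⟨fun h z hz w hw hzw ha => hzw (h hz hw ?_), fun h z hz w hw hzw => ?_⟩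
  · exact (div_add_add_mul_eq_iff (hne z hz) (hne w hw)).2 (Or.inr ha)
  · by_contra hzw'
    exact h z hz w hw hzw' (((div_add_add_mul_eq_iff (hne z hz) (hne w hw)).1 hzw).resolve_left hzw')

lemma ne_mul_mul_of_norm_le {K : Type*} [NormedDivisionRing K] {a c z w : K} (ha : a ≠ 0)
    (hca : ‖c‖ ≤ ‖a‖) (hz : ‖z‖ < 1) (hw : ‖w‖ < 1) : a ≠ c * (z * w) := by
  intro h
  have hzw : ‖z‖ * ‖w‖ < 1 := mul_lt_one_of_nonneg_of_lt_one_left (norm_nonneg z) hz hw.le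
  have : ‖a‖ < ‖a‖ :=
    calc ‖a‖ = ‖c‖ * (‖z‖ * ‖w‖) := by rw [h, norm_mul, norm_mul]
      _ ≤ ‖a‖ * (‖z‖ * ‖w‖) := by gcongr
      _ < ‖a‖ := mul_lt_of_lt_one_right (norm_pos_iff.2 ha) hzw
  exact this.false

lemma exists_ne_mul_eq_of_norm_lt_one {d : ℂ} (hd0 : d ≠ 0) (hd : ‖d‖ < 1) :
    ∃ z ∈ puncturedUnitDisc, ∃ w ∈ puncturedUnitDisc, z ≠ w ∧ d = z * w := by
  obtain ⟨u, rfl⟩ := IsAlgClosed.exists_eq_mul_self d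
  have hu0 : 0 < ‖u‖ := norm_pos_iff.2 (left_ne_zero_of_mul hd0)
  have hu1 : ‖u‖ < 1 := by
    rw [norm_mul] at hd
    nlinarith
  obtain ⟨t, ht1, htu⟩ := exists_between ((one_lt_inv₀ hu0).2 hu1)
  have ht0 : (0 : ℝ) < t := one_pos.trans ht1
  have htC : (t : ℂ) ≠ 0 := Complex.ofReal_ne_zero.2 ht0.ne'
  refine ⟨t * u, ⟨?_, ?_⟩, u / t, ⟨?_, ?_⟩, ?_, by field_simp⟩
  any_goals simp only [norm_mul, norm_div, Complex.norm_real, Real.norm_of_nonneg ht0.le]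
  · positivity
  · rwa [← lt_div_iff₀ hu0, one_div]
  · positivity
  · exact (div_lt_one ht0).2 (hu1.trans ht1)
  · intro h
    have htt : (t : ℂ) * t = 1 := by
      field_simp at h
      exact mul_right_cancel₀ (left_ne_zero_of_mul hd0) (by linear_combination h)
    norm_cast at htt
    nlinarith

/-- Φ(z) = a/z + b + c·z is injective on the punctured open unit disc iff |a| ≥ |c|. -/
theorem stmt_0 (a b c : ℂ) (ha : a ≠ 0) :
    Set.InjOn (fun z : ℂ => a / z + b + c * z)
      {z : ℂ | 0 < ‖z‖ ∧ ‖z‖ < 1} ↔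
    ‖c‖ ≤ ‖a‖ := by
  change InjOn _ puncturedUnitDisc ↔ _
  rw [injOn_div_add_add_mul_iff zero_notMem_puncturedUnitDisc]
  constructor
  · intro h
    by_contra! hac
    have hc : c ≠ 0 := norm_pos_iff.1 ((norm_nonneg a).trans_lt hac)
    obtain ⟨z, hz, w, hw, hzw, hprod⟩ := exists_ne_mul_eq_of_norm_lt_one (div_ne_zero ha hc)
      (by rwa [norm_div, div_lt_one (norm_pos_iff.2 hc)])
    exact h z hz w hw hzw (by rw [← hprod]; field_simp)
  · rintro hca z ⟨-, hz⟩ w ⟨-, hw⟩ -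
    exact ne_mul_mul_of_norm_le ha hca hz hw
end

section
/- The function Φ(z) = a/z + b + c·z is injective on the punctured closed unit disc {z : 0 < |z| ≤ 1} if and only if |a| > |c|. -/
/-!
Clearing denominators, `Φ z - Φ w = (z - w) (c z w - a) / (z w)`, so two distinct points
have the same image exactly when `c z w = a`. In the closed unit disc this forces
`‖a‖ = ‖c‖ ‖z‖ ‖w‖ ≤ ‖c‖`. Conversely, if `‖a‖ ≤ ‖c‖` then `t = a / c` lies in the punctured
disc, and with `s² = -t` the distinct points `s` and `-s` of the punctured disc satisfy
`c s (-s) = a`.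
-/

section Field

variable {K : Type*} [Field K]

def laurentMap (a b c z : K) : K := a / z + b + c * z

theorem laurentMap_sub_laurentMap (a b c : K) {z w : K} (hz : z ≠ 0) (hw : w ≠ 0) :
    laurentMap a b c z - laurentMap a b c w = (z - w) * (c * (z * w) - a) / (z * w) := by
  unfold laurentMap
  field_simp
  ring

theorem injOn_laurentMap_iff (a b c : K) {S : Set K} (hS : ∀ z ∈ S, z ≠ 0) :
    Set.InjOn (laurentMap a b c) S ↔ ∀ z ∈ S, ∀ w ∈ S, c * (z * w) = a → z = w := by
  constructor
  · intro hinj z hz w hw hzw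
    refine hinj hz hw (sub_eq_zero.mp ?_)
    rw [laurentMap_sub_laurentMap a b c (hS z hz) (hS w hw), hzw, sub_self, mul_zero, zero_div]
  · intro h z hz w hw hΦ
    have hprod : (z - w) * (c * (z * w) - a) = 0 := by
      have := sub_eq_zero.mpr hΦ
      rwa [laurentMap_sub_laurentMap a b c (hS z hz) (hS w hw),
        div_eq_zero_iff, or_iff_left (mul_ne_zero (hS z hz) (hS w hw))] at this
    rcases mul_eq_zero.mp hprod with hzw | hczw
    · exact sub_eq_zero.mp hzw
    · exact h z hz w hw (sub_eq_zero.mp hczw)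

end Field

theorem Complex.exists_ne_mul_eq_of_norm_le_one {t : ℂ} (ht₀ : t ≠ 0) (ht : ‖t‖ ≤ 1) :
    ∃ z w : ℂ, z ≠ w ∧ (0 < ‖z‖ ∧ ‖z‖ ≤ 1) ∧ (0 < ‖w‖ ∧ ‖w‖ ≤ 1) ∧ z * w = t := by
  obtain ⟨s, hs⟩ := IsAlgClosed.exists_eq_mul_self (-t)
  have hs₀ : s ≠ 0 := by
    rintro rfl
    exact ht₀ (neg_eq_zero.mp (by simpa using hs))
  have hs₁ : ‖s‖ ≤ 1 := by
    have : ‖s‖ ^ 2 ≤ 1 := by rwa [sq, ← norm_mul, ← hs, norm_neg]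
    exact (sq_le_one_iff₀ (norm_nonneg s)).mp this
  refine ⟨s, -s, ?_, ⟨norm_pos_iff.mpr hs₀, hs₁⟩, ?_, ?_⟩
  · intro h
    exact hs₀ (by linear_combination h / 2)
  · rw [norm_neg]
    exact ⟨norm_pos_iff.mpr hs₀, hs₁⟩
  · linear_combination hs

/-- Φ(z) = a/z + b + c·z is injective on the punctured closed unit disc iff |a| > |c|. -/
theorem stmt_1 (a b c : ℂ) (ha : a ≠ 0) :
    Set.InjOn (fun z : ℂ => a / z + b + c * z)
      {z : ℂ | 0 < ‖z‖ ∧ ‖z‖ ≤ 1} ↔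
    ‖c‖ < ‖a‖ := by
  refine (injOn_laurentMap_iff a b c fun z hz => norm_pos_iff.mp hz.1).trans ⟨?_, ?_⟩
  · intro hinj
    by_contra! hac
    have hc : c ≠ 0 := by
      rintro rfl
      exact ha (norm_le_zero_iff.mp (by simpa using hac))
    obtain ⟨z, w, hzw, hz, hw, hprod⟩ := Complex.exists_ne_mul_eq_of_norm_le_one
      (div_ne_zero ha hc) (by rw [norm_div]; exact div_le_one_of_le₀ hac (norm_nonneg c))
    exact hzw (hinj z hz w hw (by rw [hprod, mul_div_cancel₀ a hc]))
  · rintro hca z hz w hw hczw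
    have : ‖a‖ ≤ ‖c‖ := by
      rw [← hczw, norm_mul, norm_mul]
      exact mul_le_of_le_one_right (norm_nonneg c) (mul_le_one₀ hz.2 (norm_nonneg w) hw.2)
    exact absurd hca (not_lt.mpr this)
end

section
/- If T is a continuous linear operator on a complex Banach space X and the adjoint T* has an eigenvector, then T is not hypercyclic. -/
/-!
If `φ ∘ T = μ φ` with `φ ≠ 0`, then `φ` sends the orbit `Tⁿ x` to the sequence `μⁿ φ(x)`.
Since `φ` is a surjective continuous map, a dense orbit would make this sequence dense in `ℂ`.
But it is bounded when `‖μ‖ ≤ 1` and stays outside the disc of radius `‖φ x‖` when `‖μ‖ > 1`.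
-/

open Set Bornology

theorem Bornology.IsBounded.not_dense (𝕜 : Type*) {E : Type*} [NontriviallyNormedField 𝕜]
    [NormedAddCommGroup E] [NormedSpace 𝕜 E] [Nontrivial E] {s : Set E} (hs : IsBounded s) :
    ¬Dense s := fun hd ↦
  NormedSpace.unbounded_univ 𝕜 E (by simpa only [hd.closure_eq] using hs.closure)

theorem not_dense_of_forall_le_norm {E : Type*} [SeminormedAddCommGroup E] {s : Set E} {r : ℝ}
    (hr : 0 < r) (hs : ∀ z ∈ s, r ≤ ‖z‖) : ¬Dense s := fun hd ↦ by
  obtain ⟨z, hz_ball, hz_s⟩ := hd.inter_open_nonempty _ Metric.isOpen_ball (Metric.nonempty_ball.2 hr)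
  exact (hs z hz_s).not_gt (mem_ball_zero_iff.1 hz_ball)

theorem not_dense_range_pow_mul {𝕜 : Type*} [NontriviallyNormedField 𝕜] (μ c : 𝕜) :
    ¬Dense (range fun n : ℕ ↦ μ ^ n * c) := by
  rcases eq_or_ne c 0 with rfl | hc
  · simpa only [mul_zero, range_const] using isBounded_singleton.not_dense 𝕜
  rcases le_or_gt ‖μ‖ 1 with hμ | hμ
  · refine ((Metric.isBounded_closedBall (x := 0) (r := ‖c‖)).subset ?_).not_dense 𝕜
    rintro _ ⟨n, rfl⟩
    rw [mem_closedBall_zero_iff, norm_mul, norm_pow]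
    exact mul_le_of_le_one_left (norm_nonneg c) (pow_le_one₀ (norm_nonneg μ) hμ)
  · refine not_dense_of_forall_le_norm (norm_pos_iff.2 hc) ?_
    rintro _ ⟨n, rfl⟩
    rw [norm_mul, norm_pow]
    exact le_mul_of_one_le_left (norm_nonneg c) (one_le_pow₀ hμ.le)

namespace ContinuousLinearMap

theorem surjective_of_ne_zero {K M : Type*} [DivisionRing K] [TopologicalSpace K] [AddCommGroup M]
    [Module K M] [TopologicalSpace M] {φ : M →L[K] K} (hφ : φ ≠ 0) : Function.Surjective φ :=
  LinearMap.surjective_of_ne_zero (coe_injective.ne hφ : (φ : M →ₗ[K] K) ≠ 0)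

variable {R M : Type*} [CommSemiring R] [TopologicalSpace R] [IsTopologicalSemiring R]
  [AddCommMonoid M] [Module R M] [TopologicalSpace M]

theorem apply_pow_apply_of_comp_eq_smul {φ : M →L[R] R} {T : M →L[R] M} {μ : R}
    (hφ : φ.comp T = μ • φ) (n : ℕ) (x : M) : φ ((T ^ n) x) = μ ^ n * φ x := by
  induction n with
  | zero => simp
  | succ n ih =>
    rw [pow_succ', mul_apply_eq_comp, ← comp_apply, hφ, smul_apply, ih, smul_eq_mul, pow_succ',
      mul_assoc]

end ContinuousLinearMap

theorem stmt_2_general (X : Type*) [NormedAddCommGroup X] [NormedSpace ℂ X]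
    (T : X →L[ℂ] X)
    (h : ∃ (φ : X →L[ℂ] ℂ) (μ : ℂ), φ ≠ 0 ∧ φ.comp T = μ • φ) :
    ¬ ∃ x : X, Dense (Set.range fun n : ℕ => (T ^ n) x) := by
  rintro ⟨x, hx⟩
  obtain ⟨φ, μ, hφ, hT⟩ := h
  have hdense : Dense (range (φ ∘ fun n : ℕ ↦ (T ^ n) x)) :=
    (ContinuousLinearMap.surjective_of_ne_zero hφ).denseRange.comp hx φ.continuous
  refine not_dense_range_pow_mul μ (φ x) ?_
  simpa only [Function.comp_def, ContinuousLinearMap.apply_pow_apply_of_comp_eq_smul hT]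
    using hdense

/-- If the Banach-space adjoint of T has an eigenvector, then T is not hypercyclic. -/
theorem stmt_2 (X : Type*) [NormedAddCommGroup X] [NormedSpace ℂ X] [CompleteSpace X]
    [TopologicalSpace.SeparableSpace X]
    (T : X →L[ℂ] X)
    (h : ∃ (φ : X →L[ℂ] ℂ) (μ : ℂ), φ ≠ 0 ∧ φ.comp T = μ • φ) :
    ¬ ∃ x : X, Dense (Set.range fun n : ℕ => (T ^ n) x) :=
  stmt_2_general X T h
end

section
/- A normal bounded operator on a complex Hilbert space is never hypercyclic. -/
/-!
For a normal operator `‖T y‖² = re ⟪T† T y, y⟫ ≤ ‖T† T y‖ ‖y‖ = ‖T² y‖ ‖y‖`, so the norms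
`aₙ = ‖Tⁿ x‖` of an orbit are log-convex: `aₙ₊₁² ≤ aₙ₊₂ aₙ`. A dense orbit is unbounded, so the
sequence cannot vanish or be non-increasing; log-convexity then forces it to increase from some
index on, which keeps it away from `0`. But a dense orbit also comes arbitrarily close to `0`.
-/

open Set

section LogConvexSequence

variable {a : ℕ → ℝ}

theorem eq_zero_of_ge_of_sq_le_mul (h0 : ∀ n, 0 ≤ a n)
    (hconv : ∀ n, a (n + 1) ^ 2 ≤ a (n + 2) * a n) {k : ℕ} (hk : a k = 0) :
    ∀ n ≥ k, a n = 0 := by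
  refine Nat.le_induction hk fun n _ ih => ?_
  have hsq : a (n + 1) ^ 2 ≤ 0 := by simpa [ih] using hconv n
  nlinarith [h0 (n + 1)]

theorem lt_add_one_of_ge_of_sq_le_mul (hpos : ∀ n, 0 < a n)
    (hconv : ∀ n, a (n + 1) ^ 2 ≤ a (n + 2) * a n) {k : ℕ} (hk : a k < a (k + 1)) :
    ∀ n ≥ k, a n < a (n + 1) := by
  refine Nat.le_induction hk fun n _ ih => ?_
  nlinarith [hconv n, hpos n, hpos (n + 1), hpos (n + 2)]

theorem exists_pos_forall_le_of_forall_ge_le (hpos : ∀ n, 0 < a n) {k : ℕ}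
    (hk : ∀ n ≥ k, a k ≤ a n) : ∃ ε > 0, ∀ n, ε ≤ a n := by
  have hne : (Finset.range (k + 1)).Nonempty := ⟨0, Finset.mem_range.2 k.succ_pos⟩
  refine ⟨(Finset.range (k + 1)).inf' hne a, (Finset.lt_inf'_iff hne).2 fun i _ => hpos i,
    fun n => ?_⟩
  rcases le_or_gt n k with hnk | hkn
  · exact Finset.inf'_le a (Finset.mem_range.2 (Nat.lt_succ_of_le hnk))
  · exact (Finset.inf'_le a (Finset.mem_range.2 k.lt_succ_self)).trans (hk n hkn.le)

theorem exists_pos_forall_le_of_sq_le_mul (h0 : ∀ n, 0 ≤ a n)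
    (hconv : ∀ n, a (n + 1) ^ 2 ≤ a (n + 2) * a n) (hunb : ¬ BddAbove (range a)) :
    ∃ ε > 0, ∀ n, ε ≤ a n := by
  have hpos : ∀ n, 0 < a n := by
    refine fun k => (h0 k).lt_of_ne' fun hk => hunb ?_
    refine (Filter.isBoundedUnder_of_eventually_le (a := 0) ?_).bddAbove_range
    exact Filter.eventually_atTop.2
      ⟨k, fun n hn => (eq_zero_of_ge_of_sq_le_mul h0 hconv hk n hn).le⟩
  obtain ⟨k, hk⟩ : ∃ k, a k < a (k + 1) := by
    by_contra! hanti
    exact hunb ⟨a 0, forall_mem_range.2 fun n => antitone_nat_of_succ_le hanti n.zero_le⟩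
  have hstep := lt_add_one_of_ge_of_sq_le_mul hpos hconv hk
  exact exists_pos_forall_le_of_forall_ge_le hpos
    (Nat.le_induction le_rfl fun n hn ih => ih.trans (hstep n hn).le)

end LogConvexSequence

section DenseRange

variable {ι E : Type*} [NormedAddCommGroup E] {f : ι → E}

theorem not_bddAbove_norm_of_denseRange (𝕜 : Type*) [NontriviallyNormedField 𝕜]
    [NormedSpace 𝕜 E] [Nontrivial E] (hd : DenseRange f) :
    ¬ BddAbove (range fun i => ‖f i‖) := by
  rintro ⟨C, hC⟩
  have hbdd : Bornology.IsBounded (range f) :=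
    (Metric.isBounded_closedBall (x := 0) (r := C)).subset <| range_subset_iff.2 fun i => by
      simpa using hC (mem_range_self i)
  exact NormedSpace.unbounded_univ 𝕜 E (by simpa [hd.closure_range] using hbdd.closure)

theorem exists_norm_lt_of_denseRange (hd : DenseRange f) {ε : ℝ} (hε : 0 < ε) :
    ∃ i, ‖f i‖ < ε := by
  obtain ⟨i, hi⟩ := hd.exists_mem_open Metric.isOpen_ball (Metric.nonempty_ball (x := 0).2 hε)
  exact ⟨i, by simpa using hi⟩

end DenseRange

section Normal

open ContinuousLinearMap

variable {𝕜 E : Type*} [RCLike 𝕜] [NormedAddCommGroup E] [InnerProductSpace 𝕜 E]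
  [CompleteSpace E] {T : E →L[𝕜] E}

theorem IsStarNormal.norm_apply_sq_le (hT : IsStarNormal T) (y : E) :
    ‖T y‖ ^ 2 ≤ ‖T (T y)‖ * ‖y‖ :=
  calc ‖T y‖ ^ 2 = RCLike.re (inner 𝕜 ((adjoint T ∘L T) y) y) :=
        apply_norm_sq_eq_inner_adjoint_left T y
    _ ≤ ‖adjoint T (T y)‖ * ‖y‖ := re_inner_le_norm _ _
    _ = ‖T (T y)‖ * ‖y‖ := by rw [← isStarNormal_iff_norm_eq_adjoint.1 hT]

theorem IsStarNormal.norm_pow_succ_apply_sq_le (hT : IsStarNormal T) (x : E) (n : ℕ) :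
    ‖(T ^ (n + 1)) x‖ ^ 2 ≤ ‖(T ^ (n + 2)) x‖ * ‖(T ^ n) x‖ := by
  rw [pow_succ' T (n + 1), pow_succ' T n]
  exact hT.norm_apply_sq_le ((T ^ n) x)

end Normal

theorem stmt_5_general (H : Type*) [NormedAddCommGroup H] [InnerProductSpace ℂ H]
    [CompleteSpace H] [Nontrivial H]
    (T : H →L[ℂ] H)
    (hnormal : T ∘L ContinuousLinearMap.adjoint T = ContinuousLinearMap.adjoint T ∘L T) :
    ¬ ∃ x : H, Dense (Set.range fun n : ℕ => (T ^ n) x) := by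
  rintro ⟨x, hd⟩
  have hT : IsStarNormal T := ⟨hnormal.symm⟩
  obtain ⟨ε, hε, hle⟩ := exists_pos_forall_le_of_sq_le_mul (fun n => norm_nonneg _)
    (hT.norm_pow_succ_apply_sq_le x) (not_bddAbove_norm_of_denseRange ℂ hd)
  obtain ⟨n, hn⟩ := exists_norm_lt_of_denseRange hd hε
  exact (hle n).not_gt hn

/-- A normal bounded operator on a complex Hilbert space is never hypercyclic. -/
theorem stmt_5 (H : Type*) [NormedAddCommGroup H] [InnerProductSpace ℂ H]
    [CompleteSpace H] [Nontrivial H] [TopologicalSpace.SeparableSpace H]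
    (T : H →L[ℂ] H)
    (hnormal : T ∘L ContinuousLinearMap.adjoint T = ContinuousLinearMap.adjoint T ∘L T) :
    ¬ ∃ x : H, Dense (Set.range fun n : ℕ => (T ^ n) x) :=
  stmt_5_general H T hnormal
end

section
/- Let T be the left shift on ℓ²(ℕ, ℂ) and let α ∈ ℂ with |α| > 1. Then both the span of eigenvectors of αT with eigenvalues of modulus < 1 and the span of eigenvectors with eigenvalues of modulus > 1 are dense in ℓ²; consequently (via the Godefroy–Shapiro criterion) αT is hypercyclic. -/
/-!
For `|ν| < 1` the geometric sequence `e_ν = (νⁿ)` lies in `ℓ²` and `T e_ν = ν e_ν`, so `e_ν` is an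
eigenvector of `αT` with eigenvalue `αν`. If `ν` ranges over a nonempty open subset of the unit
disc, the `e_ν` span a dense subspace: `⟪e_ν̄, y⟫ = ∑ yₙ νⁿ`, so a vector orthogonal to all of them
is the coefficient sequence of a power series vanishing on an open set, hence zero. Taking
`|ν| < 1/|α|`, resp. `1/|α| < |ν| < 1`, gives the two dense spans of eigenvectors.

Godefroy–Shapiro: for `u` in the first span `(αT)ⁿ u → 0`, and for `v` in the second there are
`wₙ → 0` with `(αT)ⁿ wₙ = v`. Then `u + wₙ` is close to `u` and is mapped by `(αT)ⁿ` close to `v`,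
so `αT` is topologically transitive, and Birkhoff's transitivity theorem (a Baire category
argument) yields a dense orbit.
-/

open Filter Topology TopologicalSpace Submodule
open scoped lp

theorem exists_dense_range_iterate_of_forall_exists_iterate_mem {X : Type*} [TopologicalSpace X]
    [BaireSpace X] [SecondCountableTopology X] [Nonempty X] {f : X → X} (hf : Continuous f)
    (htrans : ∀ U V : Set X, IsOpen U → U.Nonempty → IsOpen V → V.Nonempty →
      ∃ n, ∃ z ∈ U, f^[n] z ∈ V) :
    ∃ y, Dense (Set.range fun n => f^[n] y) := by
  have hB := isBasis_countableBasis X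
  have : Countable (countableBasis X) := (countable_countableBasis X).to_subtype
  have hG : Dense (⋂ b : countableBasis X, ⋃ n, f^[n] ⁻¹' (b : Set X)) := by
    refine dense_iInter_of_isOpen (fun b => isOpen_iUnion fun n =>
      (isOpen_of_mem_countableBasis b.2).preimage (hf.iterate n)) fun b => ?_
    refine dense_iff_inter_open.mpr fun U hU hUne => ?_
    obtain ⟨n, z, hzU, hzb⟩ := htrans U b hU hUne (isOpen_of_mem_countableBasis b.2)
      (nonempty_of_mem_countableBasis b.2)
    exact ⟨z, hzU, Set.mem_iUnion.mpr ⟨n, hzb⟩⟩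
  obtain ⟨y, hy⟩ := hG.nonempty
  refine ⟨y, hB.dense_iff.mpr fun b hb _ => ?_⟩
  obtain ⟨n, hn⟩ := Set.mem_iUnion.mp (Set.mem_iInter.mp hy ⟨b, hb⟩)
  exact ⟨f^[n] y, hn, n, rfl⟩

namespace ContinuousLinearMap

variable {𝕜 E : Type*} [NormedField 𝕜] [NormedAddCommGroup E] [NormedSpace 𝕜 E]
  (A : E →L[𝕜] E) {s t : Set E}

theorem pow_apply_of_apply_eq_smul {x : E} {μ : 𝕜} (h : A x = μ • x) (n : ℕ) :
    (A ^ n) x = μ ^ n • x := by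
  induction n with
  | zero => simp
  | succ n ih => rw [pow_succ', mul_apply_eq_comp, ih, map_smul, h, smul_smul, ← pow_succ]

theorem tendsto_pow_apply_of_mem_span (hs : ∀ x ∈ s, ∃ μ : 𝕜, ‖μ‖ < 1 ∧ A x = μ • x) {x : E}
    (hx : x ∈ span 𝕜 s) : Tendsto (fun n => (A ^ n) x) atTop (𝓝 0) := by
  induction hx using span_induction with
  | mem x hx =>
    obtain ⟨μ, hμ, hAx⟩ := hs x hx
    simpa only [A.pow_apply_of_apply_eq_smul hAx, zero_smul] using
      (tendsto_pow_atTop_nhds_zero_of_norm_lt_one hμ).smul_const x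
  | zero => simpa only [map_zero] using tendsto_const_nhds
  | add x y _ _ hx hy => simpa only [map_add, add_zero] using hx.add hy
  | smul c x _ hx => simpa only [map_smul, smul_zero] using hx.const_smul c

theorem exists_tendsto_zero_pow_apply_eq_of_mem_span
    (ht : ∀ x ∈ t, ∃ μ : 𝕜, 1 < ‖μ‖ ∧ A x = μ • x) {x : E} (hx : x ∈ span 𝕜 t) :
    ∃ w : ℕ → E, Tendsto w atTop (𝓝 0) ∧ ∀ n, (A ^ n) (w n) = x := by
  induction hx using span_induction with
  | mem x hx =>
    obtain ⟨μ, hμ, hAx⟩ := ht x hx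
    have hμ0 : μ ≠ 0 := norm_pos_iff.mp (one_pos.trans hμ)
    have hμinv : ‖μ⁻¹‖ < 1 := by rw [norm_inv]; exact inv_lt_one_of_one_lt₀ hμ
    refine ⟨fun n => μ⁻¹ ^ n • x, ?_, fun n => ?_⟩
    · simpa only [zero_smul] using (tendsto_pow_atTop_nhds_zero_of_norm_lt_one hμinv).smul_const x
    · rw [map_smul, A.pow_apply_of_apply_eq_smul hAx, smul_smul, ← mul_pow,
        inv_mul_cancel₀ hμ0, one_pow, one_smul]
  | zero => exact ⟨0, tendsto_const_nhds, fun n => map_zero _⟩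
  | add x y _ _ hx hy =>
    obtain ⟨v, hv, hvx⟩ := hx
    obtain ⟨w, hw, hwy⟩ := hy
    exact ⟨fun n => v n + w n, by simpa only [add_zero] using hv.add hw,
      fun n => by rw [map_add, hvx, hwy]⟩
  | smul c x _ hx =>
    obtain ⟨w, hw, hwx⟩ := hx
    exact ⟨fun n => c • w n, by simpa only [smul_zero] using hw.const_smul c,
      fun n => by rw [map_smul, hwx]⟩

theorem exists_pow_apply_mem_of_dense_span (hs : ∀ x ∈ s, ∃ μ : 𝕜, ‖μ‖ < 1 ∧ A x = μ • x)
    (ht : ∀ x ∈ t, ∃ μ : 𝕜, 1 < ‖μ‖ ∧ A x = μ • x)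
    (hsd : Dense (span 𝕜 s : Set E)) (htd : Dense (span 𝕜 t : Set E))
    {U V : Set E} (hU : IsOpen U) (hUne : U.Nonempty) (hV : IsOpen V) (hVne : V.Nonempty) :
    ∃ n, ∃ z ∈ U, (A ^ n) z ∈ V := by
  obtain ⟨u, huU, hu⟩ := hsd.inter_open_nonempty U hU hUne
  obtain ⟨v, hvV, hv⟩ := htd.inter_open_nonempty V hV hVne
  obtain ⟨w, hw, hwv⟩ := A.exists_tendsto_zero_pow_apply_eq_of_mem_span ht hv
  have hnear_u : ∀ᶠ n in atTop, u + w n ∈ U := by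
    have := (tendsto_const_nhds (x := u)).add hw
    rw [add_zero] at this
    exact this.eventually (hU.mem_nhds huU)
  have hnear_v : ∀ᶠ n in atTop, (A ^ n) u + v ∈ V := by
    have := (A.tendsto_pow_apply_of_mem_span hs hu).add (tendsto_const_nhds (x := v))
    rw [zero_add] at this
    exact this.eventually (hV.mem_nhds hvV)
  obtain ⟨n, hnU, hnV⟩ := (hnear_u.and hnear_v).exists
  exact ⟨n, u + w n, hnU, by rwa [map_add, hwv]⟩

theorem exists_dense_range_pow_apply_of_dense_span [CompleteSpace E] [SeparableSpace E]
    (hs : ∀ x ∈ s, ∃ μ : 𝕜, ‖μ‖ < 1 ∧ A x = μ • x)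
    (ht : ∀ x ∈ t, ∃ μ : 𝕜, 1 < ‖μ‖ ∧ A x = μ • x)
    (hsd : Dense (span 𝕜 s : Set E)) (htd : Dense (span 𝕜 t : Set E)) :
    ∃ y, Dense (Set.range fun n : ℕ => (A ^ n) y) := by
  simp only [FunLike.coe_pow_eq_iterate]
  refine exists_dense_range_iterate_of_forall_exists_iterate_mem A.continuous
    fun U V hU hUne hV hVne => ?_
  simpa only [FunLike.coe_pow_eq_iterate] using
    A.exists_pow_apply_mem_of_dense_span hs ht hsd htd hU hUne hV hVne

end ContinuousLinearMap

theorem memℓp_two_geometric {ν : ℂ} (hν : ‖ν‖ < 1) : Memℓp (fun n : ℕ => ν ^ n) 2 := by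
  refine memℓp_gen ?_
  have hsq : ∀ n : ℕ, (‖ν‖ ^ n) ^ (2 : ℝ) = (‖ν‖ ^ 2) ^ n := fun n => by
    rw [Real.rpow_two, ← pow_mul, ← pow_mul, mul_comm]
  simp only [norm_pow, ENNReal.toReal_ofNat, hsq]
  exact summable_geometric_of_lt_one (by positivity) (pow_lt_one₀ (norm_nonneg ν) hν two_ne_zero)

noncomputable def geomVec (ν : ℂ) (hν : ‖ν‖ < 1) : ℓ²(ℕ, ℂ) := ⟨_, memℓp_two_geometric hν⟩

@[simp] theorem geomVec_apply {ν : ℂ} (hν : ‖ν‖ < 1) (n : ℕ) : geomVec ν hν n = ν ^ n := rfl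

theorem geomVec_ne_zero {ν : ℂ} (hν : ‖ν‖ < 1) : geomVec ν hν ≠ 0 := fun h => by
  simpa using congrArg (fun x : ℓ²(ℕ, ℂ) => x 0) h

theorem apply_geomVec_of_shift {T : ℓ²(ℕ, ℂ) →L[ℂ] ℓ²(ℕ, ℂ)} (hT : ∀ x n, T x n = x (n + 1))
    {ν : ℂ} (hν : ‖ν‖ < 1) : T (geomVec ν hν) = ν • geomVec ν hν :=
  lp.ext <| funext fun n => by simp [hT, pow_succ, mul_comm]

theorem eq_zero_of_forall_tsum_mul_pow_eq_zero {c : ℕ → ℂ} {C : ℝ} (hC : ∀ n, ‖c n‖ ≤ C)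
    {S : Set ℂ} (hSo : IsOpen S) (hSne : S.Nonempty) (hS : S ⊆ Metric.ball 0 1)
    (hsum : ∀ μ ∈ S, ∑' n, c n * μ ^ n = 0) : c = 0 := by
  set p := FormalMultilinearSeries.ofScalars ℂ c
  have hrad : 1 ≤ p.radius := by
    simpa using p.le_radius_of_bound C (r := 1) fun n => by simpa [p] using hC n
  have hp : HasFPowerSeriesOnBall p.sum p 0 1 :=
    (p.hasFPowerSeriesOnBall (one_pos.trans_le hrad)).mono one_pos hrad
  have hanalytic : AnalyticOnNhd ℂ p.sum (Metric.ball 0 1) := by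
    have := hp.analyticOnNhd
    rwa [← ENNReal.coe_one, Metric.eball_coe, NNReal.coe_one] at this
  obtain ⟨z, hz⟩ := hSne
  have hvanish : Set.EqOn p.sum 0 (Metric.ball 0 1) :=
    hanalytic.eqOn_zero_of_preconnected_of_eventuallyEq_zero (convex_ball 0 1).isPreconnected
      (hS hz) <| Filter.eventually_of_mem (hSo.mem_nhds hz) fun μ hμ =>
        (FormalMultilinearSeries.ofScalars_sum_eq c μ).trans (hsum μ hμ)
  have hp0 : p = 0 := hp.hasFPowerSeriesAt.eq_zero_of_eventually <|
    Filter.eventually_of_mem (Metric.ball_mem_nhds 0 one_pos) hvanish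
  exact (FormalMultilinearSeries.ofScalars_series_eq_zero ℂ).mp hp0

theorem dense_span_geomVec {S : Set ℂ} (hSo : IsOpen S) (hSne : S.Nonempty)
    (hS : S ⊆ Metric.ball 0 1) :
    Dense (span ℂ (Set.range fun ν : S => geomVec ν (mem_ball_zero_iff.mp (hS ν.2))) :
      Set ℓ²(ℕ, ℂ)) := by
  rw [dense_iff_topologicalClosure_eq_top, topologicalClosure_eq_top_iff, eq_bot_iff]
  intro y hy
  have hsum : ∀ μ ∈ star ⁻¹' S, ∑' n, y n * μ ^ n = 0 := fun μ hμ => by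
    have := (mem_orthogonal _ y).mp hy _ (subset_span ⟨⟨star μ, hμ⟩, rfl⟩)
    rw [lp.inner_eq_tsum] at this
    simpa [mul_comm] using this
  have hc : (fun n => y n) = 0 :=
    eq_zero_of_forall_tsum_mul_pow_eq_zero (fun n => lp.norm_apply_le_norm two_ne_zero y n)
      (hSo.preimage continuous_star) (let ⟨z, hz⟩ := hSne; ⟨star z, by simpa using hz⟩)
      (fun μ hμ => by simpa using hS hμ) hsum
  exact lp.ext hc

theorem dense_span_eigenvectors_smul_shift (c : ℂ) {T : ℓ²(ℕ, ℂ) →L[ℂ] ℓ²(ℕ, ℂ)}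
    (hT : ∀ x n, T x n = x (n + 1)) {Λ : Set ℂ} (hΛ : IsOpen Λ)
    (hne : ∃ ν : ℂ, ‖ν‖ < 1 ∧ c * ν ∈ Λ) :
    Dense (span ℂ {x | x ≠ 0 ∧ ∃ μ ∈ Λ, (c • T) x = μ • x} : Set ℓ²(ℕ, ℂ)) := by
  refine (dense_span_geomVec (S := Metric.ball 0 1 ∩ (c * ·) ⁻¹' Λ)
    (Metric.isOpen_ball.inter (hΛ.preimage (continuous_const_mul c)))
    (let ⟨ν, hν, hcν⟩ := hne; ⟨ν, mem_ball_zero_iff.mpr hν, hcν⟩) Set.inter_subset_left).mono (span_mono ?_)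
  rintro _ ⟨⟨ν, hν, hcν⟩, rfl⟩
  refine ⟨geomVec_ne_zero _, c * ν, hcν, ?_⟩
  rw [smul_apply, apply_geomVec_of_shift hT, smul_smul]

instance lp.separableSpace_two {ι 𝕜 : Type*} [Countable ι] [RCLike 𝕜] :
    SeparableSpace ℓ²(ι, 𝕜) := by
  let b : HilbertBasis ι 𝕜 ℓ²(ι, 𝕜) := default
  have hsep : IsSeparable (span 𝕜 (Set.range b) : Set ℓ²(ι, 𝕜)) :=
    (Set.countable_range b).isSeparable.span
  refine isSeparable_univ_iff.mp (hsep.closure.mono fun x _ => ?_)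
  rw [← topologicalClosure_coe, b.dense_span]
  trivial

/-- Rolewicz / Godefroy–Shapiro: for the left shift T on ℓ² and |α| > 1, both the span of
eigenvectors of αT with eigenvalues of modulus < 1 and the span of eigenvectors with
eigenvalues of modulus > 1 are dense; consequently αT is hypercyclic. -/
theorem stmt_12 (α : ℂ) (hα : 1 < ‖α‖)
    (T : lp (fun _ : ℕ => ℂ) 2 →L[ℂ] lp (fun _ : ℕ => ℂ) 2)
    (hT : ∀ (x : lp (fun _ : ℕ => ℂ) 2) (n : ℕ), T x n = x (n + 1)) :
    Dense (Submodule.span ℂ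
      {x : lp (fun _ : ℕ => ℂ) 2 | x ≠ 0 ∧ ∃ μ : ℂ, ‖μ‖ < 1 ∧ (α • T) x = μ • x}
      : Set (lp (fun _ : ℕ => ℂ) 2)) ∧
    Dense (Submodule.span ℂ
      {x : lp (fun _ : ℕ => ℂ) 2 | x ≠ 0 ∧ ∃ μ : ℂ, 1 < ‖μ‖ ∧ (α • T) x = μ • x}
      : Set (lp (fun _ : ℕ => ℂ) 2)) ∧
    ∃ y : lp (fun _ : ℕ => ℂ) 2, Dense (Set.range fun n : ℕ => ((α • T) ^ n) y) := by
  have hsmall := dense_span_eigenvectors_smul_shift α hT (Λ := {μ | ‖μ‖ < 1})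
    (isOpen_lt continuous_norm continuous_const) ⟨0, by simp⟩
  -- A real `ν` strictly between `‖α‖⁻¹` and `1` has `‖αν‖ > 1`.
  have hlarge := dense_span_eigenvectors_smul_shift α hT (Λ := {μ | 1 < ‖μ‖})
    (isOpen_lt continuous_const continuous_norm) <| by
      obtain ⟨r, hr, hr1⟩ := exists_between (inv_lt_one_of_one_lt₀ hα)
      have hr0 : 0 < r := (inv_pos.mpr (one_pos.trans hα)).trans hr
      refine ⟨r, by simpa [abs_of_pos hr0] using hr1, ?_⟩
      simpa [abs_of_pos hr0] using (inv_lt_iff_one_lt_mul₀' (one_pos.trans hα)).mp hr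
  exact ⟨hsmall, hlarge, (α • T).exists_dense_range_pow_apply_of_dense_span
    (fun _ hx => hx.2) (fun _ hx => hx.2) hsmall hlarge⟩
end

section
/- Let h : closure(𝔻) → ℂ be continuous, analytic on 𝔻, and injective on closure(𝔻). Then the boundary ∂(h(𝔻)) equals h(∂𝔻) = h(unit circle), and ℂ \ closure(h(𝔻)) is connected. -/
/-!
Since `h` is injective it is not locally constant, so by the open mapping theorem `h(𝔻)` is
open; its closure is the compact set `K = h(closure 𝔻)`, and injectivity identifies `K \ h(𝔻)`
with `h(∂𝔻)`.

`K` is homeomorphic to the closed disc, hence has the Tietze extension property and is a retract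
of `ℂ`. If some component `U` of `ℂ \ K` were bounded, gluing the retraction on `closure U` with
the identity outside would give a self-map of a large disc centred at `w ∈ U` that fixes the
boundary circle and misses `w`. Then `z ↦ z - w` would have a continuous logarithm on the
(simply connected) disc, hence on its boundary circle; this is impossible, since every lift of
`t ↦ R e^{it}` through `exp` is `t ↦ log R + it + 2πik` and so gains `2πi` per turn. So every
component of `ℂ \ K` is unbounded, hence meets the connected exterior of a disc containing `K`.
-/

open Complex Metric Set Topology Filter
open scoped Real

universe u

theorem DifferentiableOn.isOpen_image_of_injOn {U : Set ℂ} {h : ℂ → ℂ} (hU : IsOpen U)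
    (ha : DifferentiableOn ℂ h U) (hi : InjOn h U) : IsOpen (h '' U) := by
  refine isOpen_iff_mem_nhds.2 ?_
  rintro _ ⟨z, hz, rfl⟩
  have hnot_const : ¬ ∀ᶠ w in 𝓝 z, h w = h z := fun hconst ↦ by
    obtain ⟨w, ⟨hwz, hwU⟩, hw⟩ :=
      (((hconst.and (hU.mem_nhds hz)).filter_mono nhdsWithin_le_nhds).and
        (self_mem_nhdsWithin : {z}ᶜ ∈ 𝓝[≠] z)).exists
    exact hw (hi hwU hz hwz)
  exact ((ha.analyticOnNhd hU z hz).eventually_constant_or_nhds_le_map_nhds.resolve_left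
    hnot_const) (image_mem_map (hU.mem_nhds hz))

theorem ContinuousOn.closure_image_ball {E X : Type*} [NormedAddCommGroup E] [NormedSpace ℝ E]
    [ProperSpace E] [TopologicalSpace X] [T2Space X] {h : E → X} {c : E} {r : ℝ} (hr : r ≠ 0)
    (hc : ContinuousOn h (closedBall c r)) : closure (h '' ball c r) = h '' closedBall c r :=
  (closure_minimal (image_mono ball_subset_closedBall)
    ((isCompact_closedBall c r).image_of_continuousOn hc).isClosed).antisymm
    (by rw [← closure_ball c hr] at hc ⊢; exact hc.image_closure)

theorem Convex.exists_continuousOn_exp_eq {s : Set ℂ} (hs : Convex ℝ s) {f : ℂ → ℂ}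
    (hf : ContinuousOn f s) (hf0 : ∀ z ∈ s, f z ≠ 0) :
    ∃ L : ℂ → ℂ, ContinuousOn L s ∧ ∀ z ∈ s, exp (L z) = f z := by
  rcases s.eq_empty_or_nonempty with rfl | ⟨z₀, hz₀⟩
  · exact ⟨0, continuousOn_empty _, by simp⟩
  have := hs.contractibleSpace ⟨z₀, hz₀⟩
  have := hs.locallyPathConnectedSpace
  obtain ⟨L, ⟨-, hL⟩, -⟩ := isCoveringMapOn_exp.existsUnique_continuousMap_lifts
    ⟨s.domRestrict f, hf.domRestrict⟩ (a₀ := ⟨z₀, hz₀⟩) (exp_log (hf0 z₀ hz₀))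
    fun z ↦ hf0 z z.2
  classical
  refine ⟨fun z ↦ if hz : z ∈ s then L ⟨z, hz⟩ else 0, ?_, fun z hz ↦ ?_⟩
  · rw [continuousOn_iff_continuous_domRestrict, domRestrict_dite]
    exact L.continuous
  · simp only [dif_pos hz]
    exact congrFun hL ⟨z, hz⟩

theorem not_exists_continuousOn_exp_eq_sub_center {c : ℂ} {R : ℝ} (hR : 0 < R) :
    ¬ ∃ L : ℂ → ℂ, ContinuousOn L (sphere c R) ∧ ∀ z ∈ sphere c R, exp (L z) = z - c := by
  rintro ⟨L, hL, hexp⟩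
  set θ : ℝ → ℂ := fun t ↦ L (circleMap c R t)
  have hθ : Continuous θ :=
    hL.comp_continuous (continuous_circleMap c R) (circleMap_mem_sphere c hR.le)
  have hθexp (t : ℝ) : exp (θ t) = R * exp (t * I) := by
    rw [hexp _ (circleMap_mem_sphere c hR.le t), circleMap, add_sub_cancel_left]
  have hlift : θ = fun t : ℝ ↦ θ 0 + t * I := by
    refine isCoveringMap_exp.eq_of_comp_eq hθ (by fun_prop) ?_ 0 (by simp)
    funext t
    simp [Complex.exp_add, hθexp]
  have hper : θ (2 * π) = θ 0 := by
    simp only [θ]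
    rw [← zero_add (2 * π), periodic_circleMap]
  have := congrFun hlift (2 * π)
  rw [hper] at this
  simp [Real.pi_ne_zero, I_ne_zero] at this

theorem mem_image_closedBall_of_eqOn_sphere {c : ℂ} {R : ℝ} (hR : 0 < R) {Φ : ℂ → ℂ}
    (hΦ : ContinuousOn Φ (closedBall c R)) (hid : EqOn Φ id (sphere c R)) :
    c ∈ Φ '' closedBall c R := by
  by_contra hc
  obtain ⟨L, hL, hexp⟩ := (convex_closedBall c R).exists_continuousOn_exp_eq
    (hΦ.sub continuousOn_const) fun z hz ↦ sub_ne_zero.2 fun h ↦ hc ⟨z, hz, h⟩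
  refine not_exists_continuousOn_exp_eq_sub_center hR
    ⟨L, hL.mono sphere_subset_closedBall, fun z hz ↦ ?_⟩
  rw [hexp z (sphere_subset_closedBall hz), Pi.sub_apply, hid hz, id]

theorem IsOpen.frontier_connectedComponentIn_subset {X : Type*} [TopologicalSpace X]
    [LocallyConnectedSpace X] {F : Set X} (hF : IsOpen F) (x : X) :
    frontier (connectedComponentIn F x) ⊆ Fᶜ := by
  intro y hy hyF
  obtain ⟨z, hzy, hzx⟩ := mem_closure_iff.1 hy.1 _ hF.connectedComponentIn
    (mem_connectedComponentIn hyF)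
  have hyx : y ∈ connectedComponentIn F x := by
    rw [connectedComponentIn_eq hzx, ← connectedComponentIn_eq hzy]
    exact mem_connectedComponentIn hyF
  exact hy.2 (hF.connectedComponentIn.interior_eq.symm ▸ hyx)

theorem IsClosed.exists_retraction {X : Type u} [TopologicalSpace X] [NormalSpace X]
    {K : Set X} (hK : IsClosed K) [TietzeExtension.{u} K] :
    ∃ ρ : C(X, K), ∀ x : K, ρ x = x := by
  obtain ⟨ρ, hρ⟩ := (ContinuousMap.id K).exists_restrict_eq hK
  exact ⟨ρ, fun x ↦ DFunLike.congr_fun hρ x⟩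

theorem Set.InjOn.tietzeExtension_image {Y X : Type*} [TopologicalSpace Y] [TopologicalSpace X]
    [T2Space X] {s : Set Y} (hs : IsCompact s) [TietzeExtension.{u} s] {h : Y → X}
    (hc : ContinuousOn h s) (hi : InjOn h s) : TietzeExtension.{u} (h '' s) := by
  have := isCompact_iff_compactSpace.1 hs
  have hemb := (continuousOn_iff_continuous_domRestrict.1 hc).isClosedEmbedding hi.injective
  exact .of_homeo ((Homeomorph.setCongr (range_domRestrict h s).symm).trans
    hemb.isEmbedding.toHomeomorph.symm)

theorem IsClosed.not_isBounded_connectedComponentIn_compl {K : Set ℂ} (hK : IsClosed K)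
    [TietzeExtension.{0} K] {w : ℂ} (hw : w ∉ K) :
    ¬ Bornology.IsBounded (connectedComponentIn Kᶜ w) := by
  intro hbdd
  set U := connectedComponentIn Kᶜ w
  obtain ⟨ρ, hρ⟩ := hK.exists_retraction
  obtain ⟨R, hR, hUR⟩ := hbdd.closure.subset_ball_lt 0 w
  classical
  set Φ : ℂ → ℂ := fun z ↦ if z ∈ closure U then ρ z else z
  have hΦ : Continuous Φ := by
    refine Continuous.if (fun z hz ↦ ?_) (by fun_prop) continuous_id
    have hzK : z ∈ K := by
      simpa using hK.isOpen_compl.frontier_connectedComponentIn_subset w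
        (frontier_closure_subset hz)
    exact congrArg Subtype.val (hρ ⟨z, hzK⟩)
  have hid : EqOn Φ id (sphere w R) := fun z hz ↦
    if_neg fun hzU ↦ (mem_ball.1 (hUR hzU)).ne (mem_sphere.1 hz)
  obtain ⟨z, -, hz⟩ := mem_image_closedBall_of_eqOn_sphere hR hΦ.continuousOn hid
  by_cases hzU : z ∈ closure U
  · simp only [Φ, hzU, if_true] at hz
    exact hw (hz ▸ (ρ z).2)
  · simp only [Φ, hzU, if_false] at hz
    exact hzU (hz ▸ subset_closure (mem_connectedComponentIn hw))

theorem isConnected_compl_closedBall_of_one_lt_rank {E : Type*} [NormedAddCommGroup E]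
    [NormedSpace ℝ E] (h : 1 < Module.rank ℝ E) (x : E) {r : ℝ} (hr : 0 ≤ r) :
    IsConnected (closedBall x r)ᶜ := by
  convert ((isConnected_Ioi (a := r)).prod (isConnected_sphere h 0 zero_le_one)).image
    (fun p : ℝ × E ↦ x + p.1 • p.2) (by fun_prop) using 1
  ext z
  constructor
  · intro hz
    have hzr : r < ‖z - x‖ := by simpa [dist_eq_norm] using hz
    have hz0 : ‖z - x‖ ≠ 0 := (hr.trans_lt hzr).ne'
    refine ⟨(‖z - x‖, ‖z - x‖⁻¹ • (z - x)), ⟨?_, ?_⟩, ?_⟩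
    · exact hzr
    · simp [norm_smul, hz0]
    · simp [smul_smul, hz0]
  · rintro ⟨⟨t, v⟩, ⟨ht, hv⟩, rfl⟩
    simp only [mem_Ioi, mem_sphere_zero_iff_norm] at ht hv
    simpa [dist_eq_norm, norm_smul, hv, abs_of_pos (hr.trans_lt ht)]

theorem isConnected_compl_of_forall_not_isBounded {E : Type*} [NormedAddCommGroup E]
    [NormedSpace ℝ E] (h : 1 < Module.rank ℝ E) {K : Set E} (hK : Bornology.IsBounded K)
    (hcomp : ∀ w ∉ K, ¬ Bornology.IsBounded (connectedComponentIn Kᶜ w)) : IsConnected Kᶜ := by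
  obtain ⟨R, hR, hKR⟩ := hK.subset_closedBall_lt 0 0
  have hV := isConnected_compl_closedBall_of_one_lt_rank h 0 hR.le
  have hVK : (closedBall 0 R)ᶜ ⊆ Kᶜ := compl_subset_compl.2 hKR
  obtain ⟨w₀, hw₀⟩ := hV.nonempty
  refine ⟨⟨w₀, hVK hw₀⟩, isPreconnected_of_forall w₀ fun w hw ↦ ?_⟩
  obtain ⟨z, hzU, hzV⟩ : (connectedComponentIn Kᶜ w ∩ (closedBall 0 R)ᶜ).Nonempty := by
    rw [← sdiff_eq, sdiff_nonempty]
    exact fun hsub ↦ hcomp w hw (isBounded_closedBall.subset hsub)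
  exact ⟨_, union_subset (connectedComponentIn_subset _ _) hVK, .inr hw₀,
    .inl (mem_connectedComponentIn hw),
    isPreconnected_connectedComponentIn.union z hzU hzV hV.isPreconnected⟩

/-- For h continuous and injective on the closed unit disc and analytic in the interior,
the boundary of h(𝔻) is h(𝕋), and the complement of the closure of h(𝔻) is connected. -/
theorem stmt_13 (h : ℂ → ℂ)
    (hc : ContinuousOn h (Metric.closedBall (0 : ℂ) 1))
    (ha : DifferentiableOn ℂ h (Metric.ball (0 : ℂ) 1))
    (hi : Set.InjOn h (Metric.closedBall (0 : ℂ) 1)) :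
    frontier (h '' Metric.ball (0 : ℂ) 1) = h '' Metric.sphere (0 : ℂ) 1 ∧
    IsConnected ((closure (h '' Metric.ball (0 : ℂ) 1))ᶜ) := by
  have hK : IsCompact (h '' closedBall (0 : ℂ) 1) :=
    (isCompact_closedBall 0 1).image_of_continuousOn hc
  have hcl := hc.closure_image_ball one_ne_zero
  have hopen := ha.isOpen_image_of_injOn isOpen_ball (hi.mono ball_subset_closedBall)
  refine ⟨?_, ?_⟩
  · rw [frontier, hcl, hopen.interior_eq, ← hi.image_sdiff_subset ball_subset_closedBall,
      closedBall_sdiff_ball]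
  · have := hi.tietzeExtension_image (isCompact_closedBall 0 1) hc
    rw [hcl]
    exact isConnected_compl_of_forall_not_isBounded (by simp [Complex.rank_real_complex])
      hK.isBounded fun w hw ↦ hK.isClosed.not_isBounded_connectedComponentIn_compl hw
end
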